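/- arXiv:1612.03736 — 6 statements merged into one kernel-verified Lean document; each statement's English description precedes it below -/
import Mathlib

section
/- Let G be a finite simple graph of order n, let λ be a positive integer, and suppose G is λ-quasi-regularizable. Then for every integer k with 0 ≤ k < α(G), we have (k+1)·s_{k+1} ≤ (n − (λ+1)·k)·s_k. -/
open Finset
open scoped Classical

variable {V : Type*}

/-- `S` is an independent set in `G`: its vertices are pairwise non-adjacent. -/
def IsIndepSet (G : SimpleGraph V) (S : Finset V) : Prop :=
  ∀ ⦃u⦄, u ∈ S → ∀ ⦃v⦄, v ∈ S → ¬ G.Adj u v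

/-- The neighborhood `N(S)`: all vertices having at least one neighbor in `S`. -/
noncomputable def neigh [Fintype V] (G : SimpleGraph V) (S : Finset V) : Finset V :=
  Finset.univ.filter fun v => ∃ u ∈ S, G.Adj u v

/-- The independence number `α(G)`: the maximum size of an independent set. -/
noncomputable def indepNum [Fintype V] (G : SimpleGraph V) : ℕ :=
  (Finset.univ.filter fun S : Finset V => IsIndepSet G S).sup Finset.card

/-- `s_k`: the number of independent sets of size `k` in `G`. -/
noncomputable def indepCount [Fintype V] (G : SimpleGraph V) (k : ℕ) : ℕ :=
  (Finset.univ.filter fun S : Finset V => IsIndepSet G S ∧ S.card = k).card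

/-- A maximal independent set (not properly contained in another independent set). -/
def IsMaximalIndepSet (G : SimpleGraph V) (S : Finset V) : Prop :=
  IsIndepSet G S ∧ ∀ T : Finset V, IsIndepSet G T → S ⊆ T → S = T

/-- `G` is well-covered: all maximal independent sets have the same cardinality. -/
def IsWellCovered (G : SimpleGraph V) : Prop :=
  ∀ S T : Finset V, IsMaximalIndepSet G S → IsMaximalIndepSet G T → S.card = T.card

/-- `G` is 1-well-covered: it is well-covered, has at least two vertices, and
deleting any vertex leaves a well-covered graph. -/
def IsOneWellCovered [Fintype V] (G : SimpleGraph V) : Prop :=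
  IsWellCovered G ∧ 2 ≤ Fintype.card V ∧
    ∀ v : V, IsWellCovered (G.induce ({v}ᶜ : Set V))

/-- The corona `H ∘ K₂`: for each vertex `v` of `H`, two new vertices
(`(v, false)` and `(v, true)`) adjacent to each other and to `v` are added. -/
def corona2 (H : SimpleGraph V) : SimpleGraph (V ⊕ V × Bool) :=
  SimpleGraph.fromRel fun x y =>
    match x, y with
    | Sum.inl u, Sum.inl v => H.Adj u v
    | Sum.inl u, Sum.inr (v, _) => u = v
    | Sum.inr (u, _), Sum.inr (v, _) => u = v
    | _, _ => False

/-- If `G` is a `λ`-quasi-regularizable graph of order `n`, then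
`(k+1)·s_{k+1} ≤ (n − (λ+1)k)·s_k` for all `0 ≤ k < α(G)`. -/
theorem stmt_0 {V : Type*} [Fintype V] (G : SimpleGraph V) (n : ℕ)
    (hn : Fintype.card V = n) (lam : ℕ) (hlam : 0 < lam)
    (hqr : ∀ S : Finset V, IsIndepSet G S → lam * S.card ≤ (neigh G S).card)
    (k : ℕ) (hk : k < indepNum G) :
    ((k : ℤ) + 1) * indepCount G (k + 1) ≤
      ((n : ℤ) - ((lam : ℤ) + 1) * k) * indepCount G k := by
  classical
  set A : Finset (Finset V) :=
    Finset.univ.filter fun S : Finset V => IsIndepSet G S ∧ S.card = k with hA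
  set B : Finset (Finset V) :=
    Finset.univ.filter fun S : Finset V => IsIndepSet G S ∧ S.card = k + 1 with hB
  set ext : Finset V → Finset V := fun S =>
    Finset.univ.filter fun v => v ∉ S ∧ IsIndepSet G (insert v S) with hext
  -- key double counting identity in ℕ
  have key : (k + 1) * B.card = ∑ S ∈ A, (ext S).card := by
    have h1 : (k + 1) * B.card = ∑ T ∈ B, T.card := by
      rw [Finset.sum_congr rfl (fun T hT => ?_), Finset.sum_const, smul_eq_mul, mul_comm]
      exact (Finset.mem_filter.mp hT).2.2
    rw [h1]
    have h2 : ∀ T ∈ B, T.card = ∑ v ∈ T, 1 := fun T _ => by simp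
    rw [Finset.sum_congr rfl h2]
    have h3 : ∀ S ∈ A, (ext S).card = ∑ v ∈ ext S, 1 := fun S _ => by simp
    rw [Finset.sum_congr rfl h3, Finset.sum_sigma', Finset.sum_sigma']
    apply Finset.sum_bij (fun (p : Σ _ : Finset V, V) _ => (⟨p.1.erase p.2, p.2⟩ : Σ _ : Finset V, V))
    · rintro ⟨T, v⟩ hp
      simp only [Finset.mem_sigma] at hp ⊢
      obtain ⟨hT, hv⟩ := hp
      obtain ⟨hTi, hTc⟩ := (Finset.mem_filter.mp hT).2
      have hvT : v ∈ T := hv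
      refine ⟨Finset.mem_filter.mpr ⟨Finset.mem_univ _, ?_, ?_⟩, ?_⟩
      · exact fun u hu w hw => hTi (Finset.mem_of_mem_erase hu) (Finset.mem_of_mem_erase hw)
      · rw [Finset.card_erase_of_mem hvT, hTc]; rfl
      · rw [hext]
        refine Finset.mem_filter.mpr ⟨Finset.mem_univ _, Finset.notMem_erase _ _, ?_⟩
        rw [Finset.insert_erase hvT]; exact hTi
    · rintro ⟨T, v⟩ hp ⟨T', v'⟩ hp' h
      simp only [Sigma.mk.inj_iff, heq_eq_eq] at h ⊢
      obtain ⟨he, hv⟩ := h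
      subst hv
      simp only [Finset.mem_sigma] at hp hp'
      refine ⟨?_, rfl⟩
      rw [← Finset.insert_erase (hp.2 : v ∈ T), ← Finset.insert_erase (hp'.2 : v ∈ T'), he]
    · rintro ⟨S, v⟩ hp
      simp only [Finset.mem_sigma] at hp
      obtain ⟨hS, hv⟩ := hp
      obtain ⟨hSi, hSc⟩ := (Finset.mem_filter.mp hS).2
      rw [hext] at hv
      obtain ⟨-, hvS, hins⟩ := Finset.mem_filter.mp hv
      refine ⟨⟨insert v S, v⟩, ?_, ?_⟩
      · simp only [Finset.mem_sigma]
        refine ⟨Finset.mem_filter.mpr ⟨Finset.mem_univ _, hins, ?_⟩, Finset.mem_insert_self _ _⟩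
        rw [Finset.card_insert_of_notMem hvS, hSc]
      · simp [Finset.erase_insert hvS]
    · intros; rfl
  -- per-term bound in ℤ
  have bound : ∀ S ∈ A, ((ext S).card : ℤ) ≤ (n : ℤ) - ((lam : ℤ) + 1) * k := by
    intro S hS
    obtain ⟨hSi, hSc⟩ := (Finset.mem_filter.mp hS).2
    have hdisj : Disjoint S (neigh G S) := by
      rw [Finset.disjoint_left]
      intro v hvS hvN
      rw [neigh] at hvN
      obtain ⟨-, u, hu, hadj⟩ := Finset.mem_filter.mp hvN
      exact hSi hu hvS hadj
    have hsub : ext S ⊆ Finset.univ \ (S ∪ neigh G S) := by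
      intro v hv
      rw [hext] at hv
      obtain ⟨-, hvS, hins⟩ := Finset.mem_filter.mp hv
      rw [Finset.mem_sdiff, Finset.mem_union]
      refine ⟨Finset.mem_univ _, ?_⟩
      rintro (h | h)
      · exact hvS h
      · rw [neigh] at h
        obtain ⟨-, u, hu, hadj⟩ := Finset.mem_filter.mp h
        exact hins (Finset.mem_insert_of_mem hu) (Finset.mem_insert_self _ _) hadj
    have h1 : (ext S).card ≤ Fintype.card V - (S ∪ neigh G S).card := by
      have := Finset.card_le_card hsub
      rwa [Finset.card_sdiff_of_subset (Finset.subset_univ _), Finset.card_univ] at this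
    have hcardU : (S ∪ neigh G S).card = k + (neigh G S).card := by
      rw [Finset.card_union_of_disjoint hdisj, hSc]
    have hle : (S ∪ neigh G S).card ≤ Fintype.card V := by
      rw [← Finset.card_univ]; exact Finset.card_le_card (Finset.subset_univ _)
    have hqr' := hqr S hSi
    rw [hSc] at hqr'
    have : ((ext S).card : ℤ) ≤ (Fintype.card V : ℤ) - ((S ∪ neigh G S).card : ℤ) := by
      have := Int.ofNat_le.mpr h1
      omega
    rw [hcardU] at this
    push_cast at this ⊢
    have : ((ext S).card : ℤ) ≤ (Fintype.card V : ℤ) - (k : ℤ) - ((neigh G S).card : ℤ) := by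
      push_cast at this; linarith
    have hq : ((lam : ℤ)) * k ≤ ((neigh G S).card : ℤ) := by exact_mod_cast hqr'
    rw [hn] at this
    linarith
  -- conclude
  have hsum : (∑ S ∈ A, ((ext S).card : ℤ)) ≤ ∑ _S ∈ A, ((n : ℤ) - ((lam : ℤ) + 1) * k) :=
    Finset.sum_le_sum bound
  rw [Finset.sum_const, nsmul_eq_mul] at hsum
  have hkey' : ((k : ℤ) + 1) * B.card = ∑ S ∈ A, ((ext S).card : ℤ) := by
    exact_mod_cast key
  have : indepCount G (k + 1) = B.card := rfl
  have hA' : indepCount G k = A.card := rfl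
  rw [this, hA', hkey']
  calc (∑ S ∈ A, ((ext S).card : ℤ)) ≤ (A.card : ℤ) * ((n : ℤ) - ((lam : ℤ) + 1) * k) := hsum
    _ = ((n : ℤ) - ((lam : ℤ) + 1) * k) * A.card := by ring
end

section
/- Let G be a finite simple graph of order n, let λ be a positive integer, and suppose G is λ-quasi-regularizable. Then with r = ⌈(n−1)/(λ+2)⌉, the coefficients satisfy s_r ≥ s_{r+1} ≥ ⋯ ≥ s_{α(G)}; that is, s_k ≥ s_{k+1} for every k with r ≤ k < α(G). -/
open Finset
open scoped Classical

variable {V : Type*}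

/-!
Double count the pairs `B ⊆ A` of independent sets with `#B = k`, `#A = k + 1`. Each `A`
contains exactly `k + 1` such `B`. Conversely `A` is `B` plus one vertex outside `B ∪ N(B)`,
and `λ`-quasi-regularizability gives `#N(B) ≥ λk`, so each `B` has at most `n - (λ + 1)k`
extensions. For `k ≥ ⌈(n - 1)/(λ + 2)⌉` this is at most `k + 1`, whence `s_{k+1} ≤ s_k`.
-/

def IsQuasiRegularizable [Fintype V] (G : SimpleGraph V) (lam : ℕ) : Prop :=
  ∀ S : Finset V, IsIndepSet G S → lam * #S ≤ #(neigh G S)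

noncomputable def indepSetsOfCard [Fintype V] (G : SimpleGraph V) (k : ℕ) : Finset (Finset V) :=
  univ.filter fun S => IsIndepSet G S ∧ #S = k

namespace IsIndepSet

variable {G : SimpleGraph V}

lemma mono {S T : Finset V} (hT : IsIndepSet G T) (hST : S ⊆ T) : IsIndepSet G S :=
  fun _ hu _ hv => hT (hST hu) (hST hv)

lemma disjoint_neigh [Fintype V] {S : Finset V} (hS : IsIndepSet G S) :
    Disjoint S (neigh G S) := by
  rw [disjoint_left]
  intro v hv hvN
  obtain ⟨u, hu, huv⟩ := (mem_filter.mp hvN).2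
  exact hS hu hv huv

end IsIndepSet

section DoubleCounting

variable [Fintype V] {G : SimpleGraph V} {k : ℕ}

lemma mem_indepSetsOfCard {S : Finset V} :
    S ∈ indepSetsOfCard G k ↔ IsIndepSet G S ∧ #S = k := by
  simp [indepSetsOfCard]

lemma card_bipartiteBelow_indepSetsOfCard {A : Finset V} (hA : IsIndepSet G A)
    (hAk : #A = k + 1) :
    #((indepSetsOfCard G k).bipartiteBelow (· ⊆ ·) A) = k + 1 := by
  have hsubsets : (indepSetsOfCard G k).bipartiteBelow (· ⊆ ·) A = A.powersetCard k := by
    ext B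
    simp only [bipartiteBelow, mem_filter, mem_indepSetsOfCard, mem_powersetCard]
    exact ⟨fun ⟨⟨_, hBk⟩, hBA⟩ => ⟨hBA, hBk⟩, fun ⟨hBA, hBk⟩ => ⟨⟨hA.mono hBA, hBk⟩, hBA⟩⟩
  rw [hsubsets, card_powersetCard, hAk, Nat.choose_succ_self_right]

/-- An independent superset of `B` with one more vertex adds a vertex outside `B ∪ N(B)`. -/
lemma card_bipartiteAbove_indepSetsOfCard_le {B : Finset V} (hB : IsIndepSet G B)
    (hBk : #B = k) :
    #((indepSetsOfCard G (k + 1)).bipartiteAbove (· ⊆ ·) B)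
      ≤ Fintype.card V - (k + #(neigh G B)) := by
  have hcard : #(B ∪ neigh G B)ᶜ = Fintype.card V - (k + #(neigh G B)) := by
    rw [card_compl, card_union_of_disjoint hB.disjoint_neigh, hBk]
  rw [← hcard, ← Nat.choose_one_right #(B ∪ neigh G B)ᶜ, ← card_powersetCard]
  refine card_le_card_of_injOn (· \ B) (fun A hA => ?_) (fun A₁ hA₁ A₂ hA₂ hdiff => ?_)
  · obtain ⟨⟨hA, hAk⟩, hBA⟩ := (mem_filter.mp hA).imp_left mem_indepSetsOfCard.mp
    refine mem_powersetCard.mpr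
      ⟨fun v hv => ?_, by rw [card_sdiff_of_subset hBA, hAk, hBk]; omega⟩
    obtain ⟨hvA, hvB⟩ := mem_sdiff.mp hv
    refine mem_compl.mpr fun hvBN => (mem_union.mp hvBN).elim hvB fun hvN => ?_
    obtain ⟨u, hu, huv⟩ := (mem_filter.mp hvN).2
    exact hA (hBA hu) hvA huv
  · rw [← union_sdiff_of_subset (mem_filter.mp hA₁).2,
      ← union_sdiff_of_subset (mem_filter.mp hA₂).2]
    exact congrArg (B ∪ ·) hdiff

lemma IsQuasiRegularizable.indepCount_succ_mul_le {lam : ℕ} (hG : IsQuasiRegularizable G lam)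
    (k : ℕ) :
    indepCount G (k + 1) * (k + 1) ≤ indepCount G k * (Fintype.card V - (lam + 1) * k) := by
  refine card_mul_le_card_mul' (fun (B A : Finset V) => B ⊆ A) (fun A hA => ?_) (fun B hB => ?_)
  · obtain ⟨hA, hAk⟩ := mem_indepSetsOfCard.mp hA
    exact (card_bipartiteBelow_indepSetsOfCard hA hAk).ge
  · obtain ⟨hB, hBk⟩ := mem_indepSetsOfCard.mp hB
    have hN : lam * k ≤ #(neigh G B) := hBk ▸ hG B hB
    calc _ ≤ Fintype.card V - (k + #(neigh G B)) :=
          card_bipartiteAbove_indepSetsOfCard_le hB hBk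
      _ ≤ Fintype.card V - (lam + 1) * k := by rw [add_one_mul]; omega

end DoubleCounting

theorem stmt_1_general {V : Type*} [Fintype V] (G : SimpleGraph V) (n : ℕ)
    (hn : Fintype.card V = n) (lam : ℕ)
    (hqr : ∀ S : Finset V, IsIndepSet G S → lam * S.card ≤ (neigh G S).card)
    (r : ℕ) (hr : r = (n - 1 + (lam + 2) - 1) / (lam + 2)) :
    ∀ k : ℕ, r ≤ k → k < indepNum G → indepCount G (k + 1) ≤ indepCount G k := by
  intro k hrk _
  have hnk : n - 1 ≤ (lam + 2) * k := by
    rwa [hr, ← Nat.ceilDiv_eq_add_pred_div, ceilDiv_le_iff_le_mul (by omega)] at hrk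
  have hcount := IsQuasiRegularizable.indepCount_succ_mul_le hqr k
  have hslack : Fintype.card V - (lam + 1) * k ≤ k + 1 := by
    have hsplit : (lam + 2) * k = (lam + 1) * k + k := by ring
    omega
  exact Nat.le_of_mul_le_mul_right (hcount.trans (Nat.mul_le_mul_left _ hslack)) k.succ_pos

/-- If `G` is a `λ`-quasi-regularizable graph of order `n`, then with
`r = ⌈(n−1)/(λ+2)⌉` we have `s_r ≥ s_{r+1} ≥ ⋯ ≥ s_{α(G)}`. -/
theorem stmt_1 {V : Type*} [Fintype V] (G : SimpleGraph V) (n : ℕ)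
    (hn : Fintype.card V = n) (lam : ℕ) (hlam : 0 < lam)
    (hqr : ∀ S : Finset V, IsIndepSet G S → lam * S.card ≤ (neigh G S).card)
    (r : ℕ) (hr : r = (n - 1 + (lam + 2) - 1) / (lam + 2)) :
    ∀ k : ℕ, r ≤ k → k < indepNum G → indepCount G (k + 1) ≤ indepCount G k :=
  stmt_1_general G n hn lam hqr r hr
end

section
/- Let G be a quasi-regularizable finite simple graph of order n ≥ 2 with independence number α. Then (k+1)·s_{k+1} ≤ (n − 2k)·s_k for every integer k with 1 ≤ k < α. -/
open Finset
open scoped Classical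

variable {V : Type*}

/-- If `G` is a quasi-regularizable graph of order `n ≥ 2` with
independence number `α`, then `(k+1)·s_{k+1} ≤ (n − 2k)·s_k` for all `1 ≤ k < α`. -/
theorem stmt_2 {V : Type*} [Fintype V] (G : SimpleGraph V) (n : ℕ)
    (hn : Fintype.card V = n) (hn2 : 2 ≤ n) (alpha : ℕ) (ha : alpha = indepNum G)
    (hqr : ∀ S : Finset V, IsIndepSet G S → S.card ≤ (neigh G S).card)
    (k : ℕ) (hk1 : 1 ≤ k) (hk2 : k < alpha) :
    ((k : ℤ) + 1) * indepCount G (k + 1) ≤ ((n : ℤ) - 2 * k) * indepCount G k := by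
  classical
  subst hn
  set A := univ.filter fun S : Finset V => IsIndepSet G S ∧ S.card = k + 1 with hA
  set B := univ.filter fun S : Finset V => IsIndepSet G S ∧ S.card = k with hB
  have hAc : indepCount G (k + 1) = A.card := rfl
  have hBc : indepCount G k = B.card := rfl
  -- for T ∈ B, the set of extensions
  set E : Finset V → Finset V :=
    fun T => univ.filter fun v => v ∉ T ∧ IsIndepSet G (insert v T) with hE
  -- double counting
  have hcount : (k + 1) * A.card = ∑ T ∈ B, (E T).card := by
    have h1 : (k + 1) * A.card = ∑ S ∈ A, S.card := by
      rw [Finset.sum_congr rfl (fun S hS => ?_), Finset.sum_const, smul_eq_mul,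
        mul_comm]
      · exact ((Finset.mem_filter.mp hS).2.2)
    rw [h1, ← Finset.card_sigma, ← Finset.card_sigma]
    apply Finset.card_bij' (fun p _ => (⟨p.1.erase p.2, p.2⟩ : Σ _ : Finset V, V))
      (fun p _ => (⟨insert p.2 p.1, p.2⟩ : Σ _ : Finset V, V))
    · rintro ⟨S, v⟩ hp
      simp only [hA, hB, Finset.mem_sigma, Finset.mem_filter, Finset.mem_univ, true_and] at hp ⊢
      obtain ⟨⟨hSi, hScard⟩, hv⟩ := hp
      have herase : IsIndepSet G (S.erase v) := fun a ha b hb =>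
        hSi (Finset.mem_of_mem_erase ha) (Finset.mem_of_mem_erase hb)
      refine ⟨⟨herase, ?_⟩, ?_⟩
      · rw [Finset.card_erase_of_mem hv, hScard]; rfl
      · simp only [hE, Finset.mem_filter, Finset.mem_univ, true_and]
        refine ⟨Finset.notMem_erase v S, ?_⟩
        rw [Finset.insert_erase hv]; exact hSi
    · rintro ⟨T, v⟩ hp
      simp only [hA, hB, Finset.mem_sigma, Finset.mem_filter, Finset.mem_univ, true_and, hE] at hp ⊢
      obtain ⟨⟨hTi, hTcard⟩, hv1, hv2⟩ := hp
      exact ⟨⟨hv2, by rw [Finset.card_insert_of_notMem hv1, hTcard]⟩, Finset.mem_insert_self _ _⟩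
    · rintro ⟨S, v⟩ hp
      simp only [hA, hB, Finset.mem_sigma, Finset.mem_filter, Finset.mem_univ, true_and] at hp
      simp [Finset.insert_erase hp.2]
    · rintro ⟨T, v⟩ hp
      simp only [hA, hB, Finset.mem_sigma, Finset.mem_filter, Finset.mem_univ, true_and, hE] at hp
      simp [Finset.erase_insert hp.2.1]
  -- bound each E T
  have hbound : ∀ T ∈ B, (E T).card + 2 * k ≤ Fintype.card V := by
    intro T hT
    simp only [hB, Finset.mem_filter, Finset.mem_univ, true_and] at hT
    obtain ⟨hTi, hTcard⟩ := hT
    have hd1 : Disjoint (E T) T := by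
      rw [Finset.disjoint_left]
      intro v hv hvT
      simp only [hE, Finset.mem_filter] at hv
      exact hv.2.1 hvT
    have hd2 : Disjoint (E T ∪ T) (neigh G T) := by
      rw [Finset.disjoint_left]
      intro v hv hvN
      simp only [neigh, Finset.mem_filter, Finset.mem_univ, true_and] at hvN
      obtain ⟨u, hu, hadj⟩ := hvN
      rcases Finset.mem_union.mp hv with hvE | hvT
      · simp only [hE, Finset.mem_filter] at hvE
        exact hvE.2.2 (Finset.mem_insert_of_mem hu) (Finset.mem_insert_self _ _) hadj
      · exact hTi hu hvT hadj
    have hle : (E T ∪ T ∪ neigh G T).card ≤ Fintype.card V := by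
      simpa using Finset.card_le_univ (E T ∪ T ∪ neigh G T)
    rw [Finset.card_union_of_disjoint hd2, Finset.card_union_of_disjoint hd1] at hle
    have hN : k ≤ (neigh G T).card := hTcard ▸ hqr T hTi
    omega
  -- conclude
  rw [hAc, hBc]
  have hsum : ∑ T ∈ B, ((E T).card : ℤ) ≤ ∑ T ∈ B, ((Fintype.card V : ℤ) - 2 * k) := by
    apply Finset.sum_le_sum
    intro T hT
    have := hbound T hT
    push_cast
    omega
  rw [Finset.sum_const, nsmul_eq_mul] at hsum
  calc ((k : ℤ) + 1) * A.card = ((k + 1) * A.card : ℕ) := by push_cast; ring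
    _ = ∑ T ∈ B, ((E T).card : ℤ) := by rw [hcount]; push_cast; rfl
    _ ≤ (B.card : ℤ) * ((Fintype.card V : ℤ) - 2 * k) := hsum
    _ = ((Fintype.card V : ℤ) - 2 * k) * B.card := by ring
end

section
/- Let G be a connected finite simple graph of order n > 2 which is 1-well-covered, and let α = α(G). Then for every integer k with 1 ≤ k < α, we have the strict inequality (k+1)·s_{k+1} < (n − 2k)·s_k. -/
open Finset
open scoped Classical

variable {V : Type*}

/-! In a connected 1-well-covered graph `G` with `α = α(G)`, every maximal independent set of
`G - v` has size `α` as soon as `v` is not isolated. This produces maximum independent sets that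
avoid a prescribed independent set `A`, and for such an `M` the set `A ∪ (M \ N(A))` is
independent, whence `|A| ≤ |N(A) ∩ M|`. Playing two such sets against each other shows
`|N(A)| > |A|` for every nonempty independent `A` (on at least three vertices).

Each independent `k`-set `A` therefore extends to an independent `(k+1)`-set in at most
`n - |A| - |N(A)| ≤ n - 2k - 1` ways, while each `(k+1)`-set arises `k + 1` times; so
`(k+1) s_{k+1} ≤ (n - 2k - 1) s_k`, which is strict against `n - 2k` because `s_k > 0`. -/

section IndependentSets

variable {G : SimpleGraph V} {S M A : Finset V} {v w : V}

lemma IsIndepSet.subset (hS : IsIndepSet G S) (hAS : A ⊆ S) : IsIndepSet G A :=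
  fun _ hu _ hv => hS (hAS hu) (hAS hv)

lemma IsIndepSet.insert (hM : IsIndepSet G M) (hw : ∀ u ∈ M, ¬ G.Adj u w) :
    IsIndepSet G (insert w M) := by
  intro a ha b hb
  rw [mem_insert] at ha hb
  rcases ha with rfl | ha <;> rcases hb with rfl | hb
  · exact G.irrefl
  · exact fun h => hw b hb h.symm
  · exact hw a ha
  · exact hM ha hb

lemma isIndepSet_singleton (G : SimpleGraph V) (c : V) : IsIndepSet G {c} := by
  intro u hu w hw
  rw [mem_singleton] at hu hw
  subst hu hw
  exact G.irrefl

lemma isMaximalIndepSet_of_forall_exists_adj (hM : IsIndepSet G M)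
    (hdom : ∀ w ∉ M, ∃ u ∈ M, G.Adj u w) : IsMaximalIndepSet G M := by
  refine ⟨hM, fun T hT hMT => hMT.antisymm fun w hwT => ?_⟩
  by_contra hwM
  obtain ⟨u, huM, hadj⟩ := hdom w hwM
  exact hT (hMT huM) hwT hadj

variable [Fintype V]

lemma IsIndepSet.card_le_indepNum (hS : IsIndepSet G S) : S.card ≤ indepNum G :=
  le_sup (by simpa using hS)

lemma exists_isIndepSet_card_eq_indepNum (G : SimpleGraph V) :
    ∃ S, IsIndepSet G S ∧ S.card = indepNum G := by
  obtain ⟨S, hS, hcard⟩ := exists_mem_eq_sup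
    (univ.filter fun S : Finset V => IsIndepSet G S)
    ⟨∅, mem_filter.2 ⟨mem_univ _, fun u hu => absurd hu (notMem_empty u)⟩⟩ card
  exact ⟨S, by simpa using hS, hcard.symm⟩

lemma exists_isIndepSet_card_eq {k : ℕ} (hk : k ≤ indepNum G) :
    ∃ A, IsIndepSet G A ∧ A.card = k := by
  obtain ⟨S, hS, hcard⟩ := exists_isIndepSet_card_eq_indepNum G
  obtain ⟨A, hAS, hA⟩ := exists_subset_card_eq (hcard ▸ hk)
  exact ⟨A, hS.subset hAS, hA⟩

lemma IsIndepSet.exists_adj_of_card_eq_indepNum (hM : IsIndepSet G M)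
    (hcard : M.card = indepNum G) (hw : w ∉ M) : ∃ u ∈ M, G.Adj u w := by
  by_contra! h
  have := (hM.insert h).card_le_indepNum
  rw [card_insert_of_notMem hw] at this
  omega

lemma IsMaximalIndepSet.card_eq_indepNum (hwc : IsWellCovered G) (hM : IsMaximalIndepSet G M) :
    M.card = indepNum G := by
  obtain ⟨S, hS, hcard⟩ := exists_isIndepSet_card_eq_indepNum G
  have hSmax := isMaximalIndepSet_of_forall_exists_adj hS
    fun _ => hS.exists_adj_of_card_eq_indepNum hcard
  exact (hwc M S hM hSmax).trans hcard

lemma mem_neigh : w ∈ neigh G A ↔ ∃ u ∈ A, G.Adj u w := by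
  simp [neigh]

lemma IsIndepSet.disjoint_neigh_s9 (hA : IsIndepSet G A) : Disjoint A (neigh G A) :=
  disjoint_left.2 fun _ ha hN =>
    let ⟨_, hu, hadj⟩ := mem_neigh.1 hN
    hA hu ha hadj

lemma IsIndepSet.card_add_card_neigh_le (hA : IsIndepSet G A) :
    A.card + (neigh G A).card ≤ Fintype.card V := by
  rw [← card_union_of_disjoint hA.disjoint_neigh_s9]
  exact card_le_univ _

lemma IsIndepSet.card_le_card_neigh_inter (hA : IsIndepSet G A) (hM : IsIndepSet G M)
    (hMcard : M.card = indepNum G) (hdisj : Disjoint M A) :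
    A.card ≤ (neigh G A ∩ M).card := by
  have hT : IsIndepSet G (A ∪ (M \ neigh G A)) := by
    intro a ha b hb hadj
    simp only [mem_union, mem_sdiff] at ha hb
    rcases ha with ha | ⟨haM, haN⟩ <;> rcases hb with hb | ⟨hbM, hbN⟩
    · exact hA ha hb hadj
    · exact hbN (mem_neigh.2 ⟨a, ha, hadj⟩)
    · exact haN (mem_neigh.2 ⟨b, hb, hadj.symm⟩)
    · exact hM haM hbM hadj
  have hsize := hT.card_le_indepNum
  rw [card_union_of_disjoint (hdisj.symm.mono_right sdiff_subset)] at hsize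
  have hsplit := card_inter_add_card_sdiff M (neigh G A)
  rw [inter_comm]
  omega

end IndependentSets

/-- A maximal independent set of `G - v`, seen as a set of vertices of `G`. -/
def IsMaximalIndepSetAvoiding (G : SimpleGraph V) (v : V) (M : Finset V) : Prop :=
  IsIndepSet G M ∧ v ∉ M ∧ ∀ w ∉ M, w ≠ v → ∃ u ∈ M, G.Adj u w

section OneWellCovered

variable {G : SimpleGraph V} {S M : Finset V} {u v : V}

lemma IsMaximalIndepSetAvoiding.isMaximalIndepSet_induce (hM : IsMaximalIndepSetAvoiding G v M) :
    IsMaximalIndepSet (G.induce ({v}ᶜ : Set V)) (M.subtype (· ∈ ({v}ᶜ : Set V))) := by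
  refine isMaximalIndepSet_of_forall_exists_adj
    (fun a ha b hb => hM.1 (mem_subtype.1 ha) (mem_subtype.1 hb)) fun w hw => ?_
  obtain ⟨u, huM, hadj⟩ := hM.2.2 w (mem_subtype.not.1 hw) w.2
  exact ⟨⟨u, ne_of_mem_of_not_mem huM hM.2.1⟩, mem_subtype.2 huM, hadj⟩

lemma IsMaximalIndepSetAvoiding.card_subtype (hM : IsMaximalIndepSetAvoiding G v M) :
    (M.subtype (· ∈ ({v}ᶜ : Set V))).card = M.card := by
  rw [Finset.card_subtype, filter_true_of_mem]
  exact fun w hw => ne_of_mem_of_not_mem hw hM.2.1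

variable [Fintype V]

lemma exists_isMaximalIndepSetAvoiding_superset (hS : IsIndepSet G S) (hvS : v ∉ S) :
    ∃ M, S ⊆ M ∧ IsMaximalIndepSetAvoiding G v M := by
  obtain ⟨M, hMF, hmax⟩ := exists_max_image
    (univ.filter fun T : Finset V => IsIndepSet G T ∧ S ⊆ T ∧ v ∉ T) card
    ⟨S, by simp [hS, hvS]⟩
  simp only [mem_filter, mem_univ, true_and] at hMF hmax
  obtain ⟨hM, hSM, hvM⟩ := hMF
  refine ⟨M, hSM, hM, hvM, fun w hwM hwv => ?_⟩
  by_contra! hw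
  have hbig := hmax (insert w M)
    ⟨hM.insert hw, hSM.trans (subset_insert w M), by simp [hwv.symm, hvM]⟩
  rw [card_insert_of_notMem hwM] at hbig
  omega

/-- Extending `{u}` away from `v` gives a maximal independent set of `G` (it dominates `v`
through `u`), and it is also maximal in `G - v`: well-coveredness of `G - v` does the rest. -/
lemma IsMaximalIndepSetAvoiding.card_eq_indepNum (h1wc : IsOneWellCovered G)
    (hvu : G.Adj v u) (hM : IsMaximalIndepSetAvoiding G v M) : M.card = indepNum G := by
  obtain ⟨M₁, huM₁, hM₁⟩ :=
    exists_isMaximalIndepSetAvoiding_superset (isIndepSet_singleton G u) (by simpa using hvu.ne)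
  have huM₁ : u ∈ M₁ := huM₁ (mem_singleton_self u)
  have hM₁max : IsMaximalIndepSet G M₁ := isMaximalIndepSet_of_forall_exists_adj hM₁.1
    fun w hw => if hwv : w = v then ⟨u, huM₁, hwv ▸ hvu.symm⟩ else hM₁.2.2 w hw hwv
  have h := h1wc.2.2 v _ _ hM.isMaximalIndepSet_induce hM₁.isMaximalIndepSet_induce
  rw [hM.card_subtype, hM₁.card_subtype] at h
  exact h.trans (hM₁max.card_eq_indepNum h1wc.1)

lemma IsOneWellCovered.exists_adj (h1wc : IsOneWellCovered G) (hconn : G.Connected) (v : V) :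
    ∃ u, G.Adj v u :=
  haveI := Fintype.one_lt_card_iff_nontrivial.1 h1wc.2.1
  hconn.preconnected.exists_adj_of_nontrivial v

lemma exists_adj_ne_of_forall_adj_eq (hconn : G.Connected) (hn : 3 ≤ Fintype.card V) {x b : V}
    (hleaf : ∀ c, G.Adj x c → c = b) : ∃ c, G.Adj b c ∧ c ≠ x := by
  obtain ⟨w, -, hw⟩ := exists_mem_notMem_of_card_lt_card (s := {x, b})
    (t := univ) (by rw [card_univ]; exact card_le_two.trans_lt hn)
  obtain ⟨p⟩ := hconn x w
  obtain ⟨d, -, hfst, hsnd⟩ := p.exists_boundary_dart {x, b} (by simp) (by simpa using hw)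
  simp only [Set.mem_insert_iff, Set.mem_singleton_iff, not_or] at hfst hsnd
  rcases hfst with hx | hb
  · exact absurd (hleaf _ (hx ▸ d.adj)) hsnd.2
  · exact ⟨d.snd, hb ▸ d.adj, hsnd.1⟩

/-- If `b` were the only neighbour of `x`, then `x` could be added to a maximal independent set
of `G - x` containing a neighbour of `b`, which already has size `α`. -/
lemma exists_adj_ne (hconn : G.Connected) (hn : 3 ≤ Fintype.card V) (h1wc : IsOneWellCovered G)
    (x b : V) : ∃ c, G.Adj x c ∧ c ≠ b := by
  by_contra! hleaf
  obtain ⟨d, hxd⟩ := h1wc.exists_adj hconn x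
  have hxb : G.Adj x b := hleaf d hxd ▸ hxd
  obtain ⟨c, hbc, hcx⟩ := exists_adj_ne_of_forall_adj_eq hconn hn hleaf
  obtain ⟨M, hcM, hM⟩ :=
    exists_isMaximalIndepSetAvoiding_superset (isIndepSet_singleton G c) (v := x)
      (by simpa using hcx.symm)
  have hbM : b ∉ M := fun hb => hM.1 hb (hcM (mem_singleton_self c)) hbc
  have hbig := (hM.1.insert fun u hu hux => hbM (hleaf u hux.symm ▸ hu)).card_le_indepNum
  rw [card_insert_of_notMem hM.2.1, hM.card_eq_indepNum h1wc hxb] at hbig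
  omega

end OneWellCovered

section Neighbourhoods

variable [Fintype V] {G : SimpleGraph V} {A : Finset V}

/-- Among maximum independent sets pick one meeting `A` least; if it contains `s ∈ A`, a maximum
independent set of `G - s` through the rest of it meets `A` in fewer vertices. -/
lemma exists_isIndepSet_card_eq_indepNum_disjoint (hconn : G.Connected)
    (h1wc : IsOneWellCovered G) (hA : IsIndepSet G A) :
    ∃ M, IsIndepSet G M ∧ M.card = indepNum G ∧ Disjoint M A := by
  obtain ⟨M₀, hM₀, hmin⟩ := exists_min_image
    (univ.filter fun M : Finset V => IsIndepSet G M ∧ M.card = indepNum G)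
    (fun M => (M ∩ A).card)
    (let ⟨S, hS⟩ := exists_isIndepSet_card_eq_indepNum G; ⟨S, by simpa using hS⟩)
  simp only [mem_filter, mem_univ, true_and] at hM₀ hmin
  refine ⟨M₀, hM₀.1, hM₀.2, disjoint_iff_inter_eq_empty.2 ?_⟩
  by_contra hne
  obtain ⟨s, hs⟩ := nonempty_iff_ne_empty.2 hne
  obtain ⟨u, hsu⟩ := h1wc.exists_adj hconn s
  obtain ⟨M, hM₀M, hM⟩ := exists_isMaximalIndepSetAvoiding_superset
    (hM₀.1.subset (erase_subset s M₀)) (notMem_erase s M₀)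
  have hsub : M ∩ A ⊆ (M₀ ∩ A).erase s := by
    intro a ha
    rw [mem_inter] at ha hs
    refine mem_erase.2 ⟨ne_of_mem_of_not_mem ha.1 hM.2.1, mem_inter.2 ⟨?_, ha.2⟩⟩
    by_contra haM₀
    obtain ⟨t, htM₀, hta⟩ := hM₀.1.exists_adj_of_card_eq_indepNum hM₀.2 haM₀
    have hts : t ≠ s := by
      rintro rfl
      exact hA hs.2 ha.2 hta
    exact hM.1 (hM₀M (mem_erase.2 ⟨hts, htM₀⟩)) ha.1 hta
  have hle := hmin M ⟨hM.1, hM.card_eq_indepNum h1wc hsu⟩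
  have hlt := (card_le_card hsub).trans_lt (card_erase_lt_of_mem hs)
  omega

/-- If `|N(A)| ≤ |A|`, the exchange inequality forces `N(A)` into a maximum independent set
avoiding `A`; removing a neighbour `b` of `A` and re-completing inside `G - b` keeps avoiding `A`
(every vertex of `A` has a neighbour in `N(A) \ {b}`), and the exchange inequality then fails. -/
lemma card_lt_card_neigh (hconn : G.Connected) (hn : 3 ≤ Fintype.card V)
    (h1wc : IsOneWellCovered G) (hA : IsIndepSet G A) (hAne : A.Nonempty) :
    A.card < (neigh G A).card := by
  by_contra! hle
  obtain ⟨M₀, hM₀, hM₀card, hM₀A⟩ :=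
    exists_isIndepSet_card_eq_indepNum_disjoint hconn h1wc hA
  have hBM₀ : neigh G A ⊆ M₀ := by
    have hex := hA.card_le_card_neigh_inter hM₀ hM₀card hM₀A
    rw [← inter_eq_left]
    exact eq_of_subset_of_card_le inter_subset_left (by omega)
  obtain ⟨a₀, ha₀⟩ := hAne
  obtain ⟨b, hab⟩ := h1wc.exists_adj hconn a₀
  have hbB : b ∈ neigh G A := mem_neigh.2 ⟨a₀, ha₀, hab⟩
  obtain ⟨M, hBM, hM⟩ := exists_isMaximalIndepSetAvoiding_superset
    ((hM₀.subset hBM₀).subset (erase_subset b _)) (notMem_erase b _)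
  have hMA : Disjoint M A := disjoint_right.2 fun a haA haM => by
    obtain ⟨c, hac, hcb⟩ := exists_adj_ne hconn hn h1wc a b
    exact hM.1 haM (hBM (mem_erase.2 ⟨hcb, mem_neigh.2 ⟨a, haA, hac⟩⟩)) hac
  have hex := hA.card_le_card_neigh_inter hM.1 (hM.card_eq_indepNum h1wc hab.symm) hMA
  have hsub : neigh G A ∩ M ⊆ (neigh G A).erase b := fun x hx =>
    mem_erase.2 ⟨ne_of_mem_of_not_mem (mem_inter.1 hx).2 hM.2.1, (mem_inter.1 hx).1⟩
  have hsmall := card_le_card hsub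
  rw [card_erase_of_mem hbB] at hsmall
  have hApos := card_pos.2 ⟨a₀, ha₀⟩
  omega

end Neighbourhoods

theorem succ_mul_indepCount_succ_le [Fintype V] {G : SimpleGraph V} {k d : ℕ}
    (hd : ∀ A, IsIndepSet G A → A.card = k → d ≤ (neigh G A).card) :
    (k + 1) * indepCount G (k + 1) ≤ (Fintype.card V - (k + d)) * indepCount G k := by
  rw [mul_comm, mul_comm (Fintype.card V - _)]
  refine card_mul_le_card_mul (fun C A : Finset V => A ⊆ C) (fun C hC => ?_) fun A hA => ?_
  · simp only [mem_filter, mem_univ, true_and] at hC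
    calc k + 1 = (C.powersetCard k).card := by
          rw [card_powersetCard, hC.2, Nat.choose_succ_self_right]
      _ ≤ _ := card_le_card fun A hA => by
          rw [mem_powersetCard] at hA
          simp [mem_bipartiteAbove, hC.1.subset hA.1, hA]
  · simp only [mem_filter, mem_univ, true_and] at hA
    have hsub : bipartiteBelow (fun C A : Finset V => A ⊆ C)
        (univ.filter fun S : Finset V => IsIndepSet G S ∧ S.card = k + 1) A ⊆
        (univ \ (A ∪ neigh G A)).image (insert · A) := by
      intro C hC
      simp only [mem_bipartiteBelow, mem_filter, mem_univ, true_and] at hC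
      obtain ⟨⟨hC, hCcard⟩, hAC⟩ := hC
      obtain ⟨w, hwA, rfl⟩ := exists_eq_insert_iff.2 ⟨hAC, by rw [hA.2, hCcard]⟩
      refine mem_image.2 ⟨w, ?_, rfl⟩
      simp only [mem_sdiff, mem_univ, mem_union, mem_neigh, true_and, not_or, not_exists, not_and]
      exact ⟨hwA, fun u hu => hC (mem_insert_of_mem hu) (mem_insert_self w A)⟩
    calc _ ≤ _ := card_le_card hsub
      _ ≤ (univ \ (A ∪ neigh G A)).card := card_image_le
      _ = Fintype.card V - (A.card + (neigh G A).card) := by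
          rw [card_univ_sdiff, card_union_of_disjoint hA.1.disjoint_neigh_s9]
      _ ≤ Fintype.card V - (k + d) := by
          have := hd A hA.1 hA.2
          omega

/-- If `G` is a connected `1`-well-covered graph of order `n > 2`
and `α = α(G)`, then `(k+1)·s_{k+1} < (n − 2k)·s_k` for all `1 ≤ k < α`. -/
theorem stmt_9 {V : Type*} [Fintype V] (G : SimpleGraph V) (n : ℕ)
    (hn : Fintype.card V = n) (hconn : G.Connected) (hcard : 2 < n)
    (h1wc : IsOneWellCovered G) (alpha : ℕ) (ha : alpha = indepNum G)
    (k : ℕ) (hk1 : 1 ≤ k) (hk2 : k < alpha) :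
    ((k : ℤ) + 1) * indepCount G (k + 1) < ((n : ℤ) - 2 * k) * indepCount G k := by
  subst hn ha
  have hneigh : ∀ A, IsIndepSet G A → A.card = k → k + 1 ≤ (neigh G A).card :=
    fun A hA hAk => hAk ▸ card_lt_card_neigh hconn hcard h1wc hA (card_pos.1 (by omega))
  have hcount := succ_mul_indepCount_succ_le hneigh
  obtain ⟨A, hA, hAk⟩ := exists_isIndepSet_card_eq hk2.le
  have hsize : k + (k + 1) ≤ Fintype.card V :=
    hAk ▸ (Nat.add_le_add_left (hneigh A hA hAk) _).trans hA.card_add_card_neigh_le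
  have hpos : 0 < indepCount G k := card_pos.2 ⟨A, by simp [hA, hAk]⟩
  zify [hsize] at hcount hpos
  nlinarith
end

section
/- Let H be a connected finite simple graph without isolated vertices and let G = H ∘ K₂ be the corona of H with the complete graph K₂. Then G is 1-well-covered. -/
open Finset
open scoped Classical

variable {V : Type*}

/-- The block of a corona vertex. -/
def blk {V : Type*} : V ⊕ V × Bool → V := Sum.elim id Prod.fst

lemma blk_clique {V : Type*} (H : SimpleGraph V) {x y : V ⊕ V × Bool}
    (h : blk x = blk y) (hne : x ≠ y) : (corona2 H).Adj x y := by
  rcases x with u | ⟨u, b⟩ <;> rcases y with v | ⟨v, c⟩ <;>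
    simp only [blk, Sum.elim_inl, Sum.elim_inr, id] at h
  · exact absurd (by rw [h]) hne
  · exact ⟨hne, Or.inl h⟩
  · exact ⟨hne, Or.inr h.symm⟩
  · exact ⟨hne, Or.inl h⟩

lemma adj_inr {V : Type*} (H : SimpleGraph V) {v : V} {b : Bool} {y : V ⊕ V × Bool}
    (h : (corona2 H).Adj (Sum.inr (v, b)) y) : blk y = v := by
  rcases y with u | ⟨u, c⟩
  · rcases h.2 with h' | h'
    · exact h'.elim
    · exact h'
  · rcases h.2 with h' | h'
    · exact h'.symm
    · exact h'

/-- Key lemma: if the vertex set maps onto `V` with clique fibers, and each fiber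
contains a vertex all of whose neighbors are in the fiber, then every maximal
independent set has cardinality `Fintype.card V`. -/
lemma key {W : Type*} [Fintype W] {V : Type*} [Fintype V] (G : SimpleGraph W) (f : W → V)
    (h1 : ∀ x y, f x = f y → x ≠ y → G.Adj x y)
    (h2 : ∀ v, ∃ x, f x = v ∧ ∀ y, G.Adj x y → f y = v)
    {S : Finset W} (hS : IsMaximalIndepSet G S) : S.card = Fintype.card V := by
  have hinj : Set.InjOn f S := by
    intro a ha b hb hab
    by_contra hne
    exact hS.1 ha hb (h1 a b hab hne)
  have himg : S.image f = Finset.univ := by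
    apply Finset.eq_univ_of_forall
    intro v
    by_contra hv
    obtain ⟨x, hfx, hx⟩ := h2 v
    have hxS : x ∉ S := fun h => hv (by rw [← hfx]; exact Finset.mem_image_of_mem f h)
    have hind : IsIndepSet G (insert x S) := by
      intro a ha c hc hadj
      rcases Finset.mem_insert.1 ha with ha' | ha' <;>
        rcases Finset.mem_insert.1 hc with hc' | hc'
      · exact G.irrefl (by rwa [ha', hc'] at hadj)
      · rw [ha'] at hadj
        exact hv (by rw [← hx c hadj]; exact Finset.mem_image_of_mem f hc')
      · rw [hc'] at hadj
        exact hv (by rw [← hx a hadj.symm]; exact Finset.mem_image_of_mem f ha')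
      · exact hS.1 ha' hc' hadj
    have := hS.2 _ hind (Finset.subset_insert x S)
    exact hxS (this ▸ Finset.mem_insert_self x S)
  calc S.card = (S.image f).card := (Finset.card_image_of_injOn hinj).symm
    _ = Fintype.card V := by rw [himg, Finset.card_univ]

/-- If `H` is a connected graph without isolated vertices, then
the corona `G = H ∘ K₂` is `1`-well-covered. -/
theorem stmt_11 {V : Type*} [Fintype V] (H : SimpleGraph V)
    (hconn : H.Connected) (hiso : ∀ v : V, ∃ w : V, H.Adj v w) :
    IsOneWellCovered (corona2 H) := by
  have hne : Nonempty V := hconn.nonempty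
  refine ⟨?_, ?_, ?_⟩
  · intro S T hS hT
    have h2 : ∀ v : V, ∃ x : V ⊕ V × Bool, blk x = v ∧
        ∀ y, (corona2 H).Adj x y → blk y = v := fun v =>
      ⟨Sum.inr (v, false), rfl, fun y hy => adj_inr H hy⟩
    rw [key (corona2 H) blk (fun x y h h' => blk_clique H h h') h2 hS,
        key (corona2 H) blk (fun x y h h' => blk_clique H h h') h2 hT]
  · have : 1 ≤ Fintype.card V := Fintype.card_pos
    simp only [Fintype.card_sum, Fintype.card_prod, Fintype.card_bool]
    omega
  · intro x₀ S T hS hT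
    set W : Set (V ⊕ V × Bool) := ({x₀}ᶜ : Set _)
    have h1 : ∀ x y : W, blk (x : V ⊕ V × Bool) = blk (y : V ⊕ V × Bool) → x ≠ y →
        ((corona2 H).induce W).Adj x y := by
      intro x y h h'
      exact blk_clique H h (fun he => h' (Subtype.ext he))
    have h2 : ∀ v : V, ∃ x : W, blk (x : V ⊕ V × Bool) = v ∧
        ∀ y : W, ((corona2 H).induce W).Adj x y → blk (y : V ⊕ V × Bool) = v := by
      intro v
      have : ∃ b : Bool, (Sum.inr (v, b) : V ⊕ V × Bool) ≠ x₀ := by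
        by_contra h
        push_neg at h
        have := (h false).trans (h true).symm
        simp at this
      obtain ⟨b, hb⟩ := this
      exact ⟨⟨Sum.inr (v, b), hb⟩, rfl, fun y hy => adj_inr H hy⟩
    rw [key _ _ h1 h2 hS, key _ _ h1 h2 hT]
end

section
/- Let H be a connected finite simple graph and let G = H ∘ K₂ be the corona of H with K₂, with α = α(G). Then G is 2-quasi-regularizable and its order n satisfies n = 3α. -/
open Finset
open scoped Classical

variable {V : Type*}

/-!
The vertex set of `H ∘ K₂` is partitioned into the triangles `{v, (v, false), (v, true)}`.
An independent set `S` meets each triangle at most once, so `|S| ≤ |V(H)|`, with equality for the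
set of all `(v, false)`; hence `α = |V(H)|` and `n = 3α`. Moreover the two other vertices of the
triangle of each `x ∈ S` lie in `N(S)`, and these `2|S|` vertices are distinct.
-/

def coronaBase : V ⊕ V × Bool → V :=
  Sum.elim id Prod.fst

lemma mem_disjSum_product_univ_iff {T : Finset V} {x : V ⊕ V × Bool} :
    x ∈ T.disjSum (T ×ˢ univ) ↔ coronaBase x ∈ T := by
  rcases x with v | ⟨v, b⟩ <;> simp [coronaBase]

lemma corona2_adj_of_coronaBase_eq {H : SimpleGraph V} {x y : V ⊕ V × Bool}
    (hne : x ≠ y) (hxy : coronaBase x = coronaBase y) : (corona2 H).Adj x y := by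
  refine ⟨hne, ?_⟩
  rcases x with v | ⟨v, b⟩ <;> rcases y with w | ⟨w, c⟩ <;> simp_all [coronaBase]

lemma IsIndepSet.injOn_coronaBase {H : SimpleGraph V} {S : Finset (V ⊕ V × Bool)}
    (hS : IsIndepSet (corona2 H) S) : Set.InjOn coronaBase (S : Set (V ⊕ V × Bool)) := by
  intro x hx y hy hxy
  by_contra hne
  exact hS hx hy (corona2_adj_of_coronaBase_eq hne hxy)

lemma IsIndepSet.card_image_coronaBase {H : SimpleGraph V} {S : Finset (V ⊕ V × Bool)}
    (hS : IsIndepSet (corona2 H) S) : (S.image coronaBase).card = S.card :=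
  card_image_of_injOn hS.injOn_coronaBase

lemma isIndepSet_corona2_image_inr_false (H : SimpleGraph V) (T : Finset V) :
    IsIndepSet (corona2 H) (T.image fun v => Sum.inr (v, false)) := by
  simp only [IsIndepSet, mem_image]
  rintro _ ⟨u, -, rfl⟩ _ ⟨v, -, rfl⟩ ⟨hne, huv | hvu⟩ <;> simp_all

lemma indepNum_corona2 [Fintype V] (H : SimpleGraph V) :
    indepNum (corona2 H) = Fintype.card V := by
  apply le_antisymm
  · refine Finset.sup_le fun S hS => ?_
    rw [← (mem_filter.mp hS).2.card_image_coronaBase]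
    exact card_le_univ _
  · have hleaves := isIndepSet_corona2_image_inr_false H univ
    calc Fintype.card V
        = (univ.image fun v : V => (Sum.inr (v, false) : V ⊕ V × Bool)).card := by
          rw [card_image_of_injective _ fun u v h => by simpa using h, card_univ]
      _ ≤ indepNum (corona2 H) := le_sup (f := card) (by simpa using hleaves)

lemma two_mul_card_le_card_neigh_corona2 [Fintype V] (H : SimpleGraph V)
    {S : Finset (V ⊕ V × Bool)} (hS : IsIndepSet (corona2 H) S) :
    2 * S.card ≤ (neigh (corona2 H) S).card := by
  set T := S.image coronaBase
  set triangles := T.disjSum (T ×ˢ (univ : Finset Bool))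
  have hS_sub : S ⊆ triangles := fun x hx =>
    mem_disjSum_product_univ_iff.mpr (mem_image_of_mem _ hx)
  have hrest_sub : triangles \ S ⊆ neigh (corona2 H) S := by
    intro y hy
    obtain ⟨hy, hyS⟩ := mem_sdiff.mp hy
    obtain ⟨x, hx, hxy⟩ := mem_image.mp (mem_disjSum_product_univ_iff.mp hy)
    exact mem_filter.mpr ⟨mem_univ _, x, hx,
      corona2_adj_of_coronaBase_eq (fun h => hyS (h ▸ hx)) hxy⟩
  have hcard : triangles.card = 3 * S.card := by
    rw [card_disjSum, card_product, card_univ, Fintype.card_bool, hS.card_image_coronaBase]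
    ring
  calc 2 * S.card = (triangles \ S).card := by rw [card_sdiff_of_subset hS_sub, hcard]; omega
    _ ≤ (neigh (corona2 H) S).card := card_le_card hrest_sub

theorem stmt_12_general {V : Type*} [Fintype V] (H : SimpleGraph V)
    (G : SimpleGraph (V ⊕ V × Bool)) (hG : G = corona2 H)
    (alpha : ℕ) (ha : alpha = indepNum G) :
    (∀ S : Finset (V ⊕ V × Bool), IsIndepSet G S → 2 * S.card ≤ (neigh G S).card) ∧
    Fintype.card (V ⊕ V × Bool) = 3 * alpha := by
  subst hG ha
  refine ⟨fun S hS => two_mul_card_le_card_neigh_corona2 H hS, ?_⟩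
  rw [indepNum_corona2, Fintype.card_sum, Fintype.card_prod, Fintype.card_bool]
  ring

/-- If `H` is a connected graph and `G = H ∘ K₂` with `α = α(G)`,
then `G` is `2`-quasi-regularizable and its order `n` satisfies `n = 3α`. -/
theorem stmt_12 {V : Type*} [Fintype V] (H : SimpleGraph V) (hconn : H.Connected)
    (G : SimpleGraph (V ⊕ V × Bool)) (hG : G = corona2 H)
    (alpha : ℕ) (ha : alpha = indepNum G) :
    (∀ S : Finset (V ⊕ V × Bool), IsIndepSet G S → 2 * S.card ≤ (neigh G S).card) ∧
    Fintype.card (V ⊕ V × Bool) = 3 * alpha :=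
  stmt_12_general H G hG alpha ha
end
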